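/- arXiv:2401.14639 — 2 statements merged into one kernel-verified Lean document; each statement's English description precedes it below -/
import Mathlib

section
/- Let c > 0 and let κ : ℝ → ℝ be a smooth function with κ ≥ 0, κ vanishing outside [0, c], and ∫₀ᶜ κ(s) ds = π. Define θ(t) = ∫₀ᵗ κ(s) ds and γ(t) = (∫₀ᵗ cos θ(s) ds, ∫₀ᵗ sin θ(s) ds). Then γ : ℝ → ℝ² is injective; that is, the pseudofold profile curve is an embedded (simple) curve. -/
open MeasureTheory Real

/-- The pseudofold profile curve `γ` is injective, i.e. it is an embedded
(simple) plane curve. -/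
theorem pseudofold_profile_injective
    (c : ℝ) (hc : 0 < c) (κ : ℝ → ℝ)
    (hκ_smooth : ContDiff ℝ (⊤ : ℕ∞) κ)
    (hκ_nonneg : ∀ t, 0 ≤ κ t)
    (hκ_supp : ∀ t, t ∉ Set.Icc 0 c → κ t = 0)
    (hκ_int : ∫ s in (0:ℝ)..c, κ s = Real.pi)
    (θ : ℝ → ℝ) (hθ : ∀ t, θ t = ∫ s in (0:ℝ)..t, κ s)
    (γ : ℝ → EuclideanSpace ℝ (Fin 2))
    (hγ : ∀ t, γ t =
      ![∫ s in (0:ℝ)..t, Real.cos (θ s), ∫ s in (0:ℝ)..t, Real.sin (θ s)]) :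
    Function.Injective γ := by
  have hκc : Continuous κ := hκ_smooth.continuous
  have hκint : ∀ a b : ℝ, IntervalIntegrable κ volume a b :=
    fun a b => hκc.intervalIntegrable a b
  have hθeq : θ = fun t => ∫ s in (0:ℝ)..t, κ s := funext hθ
  have hθcont : Continuous θ := by
    rw [hθeq]; exact intervalIntegral.continuous_primitive hκint 0
  -- θ is monotone
  have hθmono : Monotone θ := by
    intro a b hab
    have h1 : θ b - θ a = ∫ s in a..b, κ s := by
      rw [hθ a, hθ b]
      exact intervalIntegral.integral_interval_sub_left (hκint 0 b) (hκint 0 a)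
    have h2 : 0 ≤ ∫ s in a..b, κ s :=
      intervalIntegral.integral_nonneg hab (fun u _ => hκ_nonneg u)
    linarith
  -- θ vanishes on (-∞, 0]
  have hθ0 : ∀ t : ℝ, t ≤ 0 → θ t = 0 := by
    intro t ht
    rw [hθ t, intervalIntegral.integral_symm, neg_eq_zero]
    have hae : ∀ᵐ x : ℝ, x ∈ Set.uIoc t 0 → κ x = 0 := by
      have h0 : ∀ᵐ x : ℝ, x ≠ (0:ℝ) := by
        rw [Filter.eventually_iff, mem_ae_iff]
        have : {x : ℝ | x ≠ 0}ᶜ = {(0:ℝ)} := by ext x; simp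
        rw [this]; exact Real.volume_singleton
      filter_upwards [h0] with x hx hmem
      rw [Set.uIoc_of_le ht] at hmem
      apply hκ_supp
      intro hIcc
      exact hx (le_antisymm hmem.2 hIcc.1)
    rw [intervalIntegral.integral_congr_ae hae, intervalIntegral.integral_zero]
  -- θ equals π on [c, ∞)
  have hθπ : ∀ t : ℝ, c ≤ t → θ t = Real.pi := by
    intro t ht
    have hzero : (∫ s in c..t, κ s) = 0 := by
      have hae : ∀ᵐ x : ℝ, x ∈ Set.uIoc c t → κ x = 0 := by
        filter_upwards with x hmem
        rw [Set.uIoc_of_le ht] at hmem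
        exact hκ_supp x (fun hIcc => absurd hmem.1 (not_lt.mpr hIcc.2))
      rw [intervalIntegral.integral_congr_ae hae, intervalIntegral.integral_zero]
    have hsplit : θ t = (∫ s in (0:ℝ)..c, κ s) + ∫ s in c..t, κ s := by
      rw [hθ t, intervalIntegral.integral_add_adjacent_intervals (hκint 0 c) (hκint c t)]
    rw [hsplit, hκ_int, hzero, add_zero]
  -- range of θ
  have hθrange : ∀ t : ℝ, 0 ≤ θ t ∧ θ t ≤ Real.pi := by
    intro t
    constructor
    · have : θ (min t 0) = 0 := hθ0 _ (min_le_right t 0)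
      calc (0:ℝ) = θ (min t 0) := this.symm
        _ ≤ θ t := hθmono (min_le_left t 0)
    · have : θ (max t c) = Real.pi := hθπ _ (le_max_right t c)
      calc θ t ≤ θ (max t c) := hθmono (le_max_left t c)
        _ = Real.pi := this
  have hsin_nonneg : ∀ t : ℝ, 0 ≤ Real.sin (θ t) :=
    fun t => Real.sin_nonneg_of_nonneg_of_le_pi (hθrange t).1 (hθrange t).2
  have hsin_cont : Continuous fun t => Real.sin (θ t) := Real.continuous_sin.comp hθcont
  have hcos_cont : Continuous fun t => Real.cos (θ t) := Real.continuous_cos.comp hθcont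
  have hsin_int : ∀ a b : ℝ, IntervalIntegrable (fun t => Real.sin (θ t)) volume a b :=
    fun a b => hsin_cont.intervalIntegrable a b
  -- Main argument
  intro a b hab
  by_contra hne
  -- wlog a < b
  wlog hlt : a < b generalizing a b
  · exact this hab.symm (Ne.symm hne) (lt_of_le_of_ne (not_lt.mp hlt) (Ne.symm hne))
  -- extract coordinate equalities
  have hkey : (![∫ s in (0:ℝ)..a, Real.cos (θ s), ∫ s in (0:ℝ)..a, Real.sin (θ s)] :
      Fin 2 → ℝ) =
      ![∫ s in (0:ℝ)..b, Real.cos (θ s), ∫ s in (0:ℝ)..b, Real.sin (θ s)] := by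
    rw [← hγ a, ← hγ b, hab]
  have hx : (∫ s in (0:ℝ)..a, Real.cos (θ s)) = ∫ s in (0:ℝ)..b, Real.cos (θ s) := by
    have := congrFun hkey 0
    simpa using this
  have hy : (∫ s in (0:ℝ)..a, Real.sin (θ s)) = ∫ s in (0:ℝ)..b, Real.sin (θ s) := by
    have := congrFun hkey 1
    simpa using this
  have hyab : (∫ s in a..b, Real.sin (θ s)) = 0 := by
    rw [← intervalIntegral.integral_interval_sub_left (hsin_int 0 b) (hsin_int 0 a), ← hy,
      sub_self]
  -- the primitive of sin∘θ starting at a vanishes on [a,b]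
  set g : ℝ → ℝ := fun t => ∫ s in a..t, Real.sin (θ s) with hg
  have hgzero : ∀ t ∈ Set.Icc a b, g t = 0 := by
    intro t ht
    have h1 : 0 ≤ g t := intervalIntegral.integral_nonneg ht.1 (fun u _ => hsin_nonneg u)
    have h2 : 0 ≤ ∫ s in t..b, Real.sin (θ s) :=
      intervalIntegral.integral_nonneg ht.2 (fun u _ => hsin_nonneg u)
    have h3 : g t + (∫ s in t..b, Real.sin (θ s)) = 0 := by
      rw [hg]
      rw [intervalIntegral.integral_add_adjacent_intervals (hsin_int a t) (hsin_int t b)]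
      exact hyab
    linarith
  -- hence sin(θ t) = 0 on (a,b)
  have hsin_zero : ∀ t ∈ Set.Ioo a b, Real.sin (θ t) = 0 := by
    intro t ht
    have hd1 : HasDerivAt g (Real.sin (θ t)) t := hsin_cont.integral_hasStrictDerivAt a t |>.hasDerivAt
    have hd0 : HasDerivAt g 0 t := by
      have hev : g =ᶠ[nhds t] (fun _ => (0:ℝ)) := by
        filter_upwards [Ioo_mem_nhds ht.1 ht.2] with x hx
        exact hgzero x (Set.mem_Icc_of_Ioo hx)
      exact (hasDerivAt_const t (0:ℝ)).congr_of_eventuallyEq hev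
    have := hd1.unique hd0
    linarith [this]
  -- hence θ t ∈ {0, π} on (a,b)
  have hθvals : ∀ t ∈ Set.Ioo a b, θ t = 0 ∨ θ t = Real.pi := by
    intro t ht
    rcases (eq_or_lt_of_le (hθrange t).1).imp Eq.symm id with h | h
    · exact Or.inl h
    rcases (hθrange t).2.eq_or_lt with h' | h'
    · exact Or.inr h'
    exact absurd (hsin_zero t ht) (ne_of_gt (Real.sin_pos_of_pos_of_lt_pi h h'))
  -- θ is constant on (a,b)
  set m : ℝ := (a + b) / 2 with hm
  have hmmem : m ∈ Set.Ioo a b := by constructor <;> [skip; skip] <;> simp [hm] <;> linarith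
  have hθconst : ∀ t ∈ Set.Ioo a b, θ t = θ m := by
    intro t ht
    by_contra hne'
    have hπ := Real.pi_pos
    have hIVT : Set.uIcc (θ t) (θ m) ⊆ θ '' Set.uIcc t m :=
      intermediate_value_uIcc hθcont.continuousOn
    have hhalf : Real.pi / 2 ∈ Set.uIcc (θ t) (θ m) := by
      rw [Set.mem_uIcc]
      rcases hθvals t ht with h1 | h1 <;> rcases hθvals m hmmem with h2 | h2 <;>
        rw [h1, h2] <;>
        first
          | (exact absurd (h1.trans h2.symm) hne')
          | (left; constructor <;> linarith)
          | (right; constructor <;> linarith)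
    obtain ⟨s, hs, hθs⟩ := hIVT hhalf
    have hsmem : s ∈ Set.Ioo a b := by
      rw [Set.mem_uIcc] at hs
      rcases hs with ⟨h1, h2⟩ | ⟨h1, h2⟩ <;>
        exact ⟨by linarith [ht.1, hmmem.1], by linarith [ht.2, hmmem.2]⟩
    rcases hθvals s hsmem with h | h <;> rw [hθs] at h <;> linarith
  -- x-coordinate increment is ±(b-a) ≠ 0, contradiction
  have hxab : (∫ s in a..b, Real.cos (θ s)) = 0 := by
    rw [← intervalIntegral.integral_interval_sub_left
      (hcos_cont.intervalIntegrable 0 b) (hcos_cont.intervalIntegrable 0 a), ← hx, sub_self]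
  have hcomp : (∫ s in a..b, Real.cos (θ s)) = (b - a) * Real.cos (θ m) := by
    rw [intervalIntegral.integral_of_le hlt.le,
      ← setIntegral_congr_set (Ioo_ae_eq_Ioc (μ := volume) (a := a) (b := b)),
      setIntegral_congr_fun measurableSet_Ioo
        (fun x hx => by show Real.cos (θ x) = Real.cos (θ m); rw [hθconst x hx]),
      setIntegral_const, Real.volume_real_Ioo_of_le hlt.le, smul_eq_mul]
  rw [hcomp] at hxab
  rcases hθvals m hmmem with h | h <;> rw [h] at hxab <;>
    [rw [Real.cos_zero] at hxab; rw [Real.cos_pi] at hxab] <;> nlinarith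
end

section
/- Let c > 0 and let κ : ℝ → ℝ be a smooth function with κ ≥ 0, κ vanishing outside [0, c], and ∫₀ᶜ κ(s) ds = π. Define θ(t) = ∫₀ᵗ κ(s) ds and γ(t) = (∫₀ᵗ cos θ(s) ds, ∫₀ᵗ sin θ(s) ds). Then there exists a constant C > 0 (depending only on c and κ) such that for every δ ∈ (0, 1] and every t ∈ ℝ, ‖δ·γ(t/δ) − (−|t|, 0)‖ ≤ C·δ. In particular, as δ → 0⁺ the rescaled pseudofold profiles δ·γ(·/δ) converge uniformly on ℝ to the sharp fold t ↦ (−|t|, 0). -/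
open MeasureTheory Real

lemma euclidean_norm_le_abs_add_abs (v : EuclideanSpace ℝ (Fin 2)) :
    ‖v‖ ≤ |v 0| + |v 1| := by
  rw [EuclideanSpace.norm_eq, Fin.sum_univ_two]
  have h1 : ‖v 0‖ ^ 2 + ‖v 1‖ ^ 2 ≤ (|v 0| + |v 1|) ^ 2 := by
    simp only [Real.norm_eq_abs]
    nlinarith [abs_nonneg (v 0), abs_nonneg (v 1)]
  calc Real.sqrt (‖v 0‖ ^ 2 + ‖v 1‖ ^ 2) ≤ Real.sqrt ((|v 0| + |v 1|) ^ 2) :=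
        Real.sqrt_le_sqrt h1
    _ = |v 0| + |v 1| := Real.sqrt_sq (by positivity)

/-- The rescaled pseudofold profiles `δ • γ(·/δ)` converge uniformly on `ℝ`,
at rate `O(δ)`, to the sharp fold `t ↦ (−|t|, 0)`: there is a constant `C > 0`, depending only
on `c` and `κ`, with `‖δ • γ(t/δ) − (−|t|, 0)‖ ≤ C·δ` for all `δ ∈ (0, 1]` and all `t`. -/
theorem pseudofold_rescaled_approximates_sharp_fold
    (c : ℝ) (hc : 0 < c) (κ : ℝ → ℝ)
    (hκ_smooth : ContDiff ℝ (⊤ : ℕ∞) κ)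
    (hκ_nonneg : ∀ t, 0 ≤ κ t)
    (hκ_supp : ∀ t, t ∉ Set.Icc 0 c → κ t = 0)
    (hκ_int : ∫ s in (0:ℝ)..c, κ s = Real.pi)
    (θ : ℝ → ℝ) (hθ : ∀ t, θ t = ∫ s in (0:ℝ)..t, κ s)
    (γ : ℝ → EuclideanSpace ℝ (Fin 2))
    (hγ : ∀ t, γ t =
      ![∫ s in (0:ℝ)..t, Real.cos (θ s), ∫ s in (0:ℝ)..t, Real.sin (θ s)])
    (sharpFold : ℝ → EuclideanSpace ℝ (Fin 2))
    (hsharp : ∀ t, sharpFold t = ![-|t|, 0]) :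
    ∃ C > (0:ℝ), ∀ δ ∈ Set.Ioc (0:ℝ) 1, ∀ t : ℝ,
      ‖δ • γ (t / δ) - sharpFold t‖ ≤ C * δ := by
  have hκc : Continuous κ := hκ_smooth.continuous
  have hκint : ∀ a b : ℝ, IntervalIntegrable κ volume a b := fun a b =>
    hκc.intervalIntegrable a b
  -- θ vanishes on (-∞, 0]
  have hθ0 : ∀ t ≤ (0:ℝ), θ t = 0 := by
    intro t ht
    rw [hθ, intervalIntegral.integral_symm]
    have h0 : ∀ᵐ x : ℝ, x ≠ (0:ℝ) := by
      rw [MeasureTheory.ae_iff]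
      simp [Real.volume_singleton]
    have hz : (∫ s in t..(0:ℝ), κ s) = ∫ s in t..(0:ℝ), (0:ℝ) := by
      apply intervalIntegral.integral_congr_ae
      filter_upwards [h0] with x hx hmem
      rw [Set.uIoc_of_le ht] at hmem
      have hxlt : x < 0 := lt_of_le_of_ne hmem.2 hx
      exact hκ_supp x (fun hx' => absurd hx'.1 (not_le.mpr hxlt))
    rw [hz]; simp
  -- θ equals π on [c, ∞)
  have hθc : ∀ t, c ≤ t → θ t = Real.pi := by
    intro t ht
    rw [hθ, ← intervalIntegral.integral_add_adjacent_intervals (hκint 0 c) (hκint c t),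
      hκ_int]
    have hz : (∫ s in c..t, κ s) = ∫ s in c..t, (0:ℝ) := by
      apply intervalIntegral.integral_congr_ae
      apply MeasureTheory.ae_of_all
      intro x hmem
      rw [Set.uIoc_of_le ht] at hmem
      exact hκ_supp x (fun hx' => absurd hx'.2 (not_le.mpr hmem.1))
    rw [hz]; simp
  -- θ is continuous
  have hθcont : Continuous θ := by
    have h := intervalIntegral.continuous_primitive hκint 0
    exact h.congr fun t => (hθ t).symm
  have hcos_cont : Continuous fun s => Real.cos (θ s) := Real.continuous_cos.comp hθcont
  have hsin_cont : Continuous fun s => Real.sin (θ s) := Real.continuous_sin.comp hθcont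
  -- γ on (-∞, 0]
  have hγneg : ∀ t ≤ (0:ℝ),
      (∫ s in (0:ℝ)..t, Real.cos (θ s)) = t ∧ (∫ s in (0:ℝ)..t, Real.sin (θ s)) = 0 := by
    intro t ht
    constructor
    · have hcong : (∫ s in (0:ℝ)..t, Real.cos (θ s)) = ∫ s in (0:ℝ)..t, (1:ℝ) := by
        apply intervalIntegral.integral_congr
        intro x hx
        rw [Set.uIcc_of_ge ht] at hx
        simp [hθ0 x hx.2]
      rw [hcong]; simp
    · have hcong : (∫ s in (0:ℝ)..t, Real.sin (θ s)) = ∫ s in (0:ℝ)..t, (0:ℝ) := by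
        apply intervalIntegral.integral_congr
        intro x hx
        rw [Set.uIcc_of_ge ht] at hx
        simp [hθ0 x hx.2]
      rw [hcong]; simp
  set A := ∫ s in (0:ℝ)..c, Real.cos (θ s) with hAdef
  set B := ∫ s in (0:ℝ)..c, Real.sin (θ s) with hBdef
  have habs1 : ∀ (f : ℝ → ℝ), (∀ x, |f x| ≤ 1) → ∀ a b : ℝ,
      |∫ s in a..b, f s| ≤ |b - a| := by
    intro f hf a b
    have := intervalIntegral.norm_integral_le_of_norm_le_const
      (C := 1) (f := f) (a := a) (b := b) (fun x _ => by simpa using hf x)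
    simpa using this
  have hAbd : |A| ≤ c := by
    have := habs1 (fun s => Real.cos (θ s)) (fun x => Real.abs_cos_le_one _) 0 c
    simpa [abs_of_pos hc] using this
  have hBbd : |B| ≤ c := by
    have := habs1 (fun s => Real.sin (θ s)) (fun x => Real.abs_sin_le_one _) 0 c
    simpa [abs_of_pos hc] using this
  -- γ on [c, ∞)
  have hγpos : ∀ t, c ≤ t →
      (∫ s in (0:ℝ)..t, Real.cos (θ s)) = A + (c - t) ∧
      (∫ s in (0:ℝ)..t, Real.sin (θ s)) = B := by
    intro t ht
    have h1 : IntervalIntegrable (fun s => Real.cos (θ s)) volume 0 c :=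
      hcos_cont.intervalIntegrable _ _
    have h2 : IntervalIntegrable (fun s => Real.cos (θ s)) volume c t :=
      hcos_cont.intervalIntegrable _ _
    have h3 : IntervalIntegrable (fun s => Real.sin (θ s)) volume 0 c :=
      hsin_cont.intervalIntegrable _ _
    have h4 : IntervalIntegrable (fun s => Real.sin (θ s)) volume c t :=
      hsin_cont.intervalIntegrable _ _
    constructor
    · rw [← intervalIntegral.integral_add_adjacent_intervals h1 h2]
      have hcong : (∫ s in c..t, Real.cos (θ s)) = ∫ s in c..t, (-1:ℝ) := by
        apply intervalIntegral.integral_congr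
        intro x hx
        rw [Set.uIcc_of_le ht] at hx
        simp [hθc x hx.1]
      rw [hcong]; simp; rfl
    · rw [← intervalIntegral.integral_add_adjacent_intervals h3 h4]
      have hcong : (∫ s in c..t, Real.sin (θ s)) = ∫ s in c..t, (0:ℝ) := by
        apply intervalIntegral.integral_congr
        intro x hx
        rw [Set.uIcc_of_le ht] at hx
        simp [hθc x hx.1]
      rw [hcong]; simp; rfl
  refine ⟨4 * c + 1, by positivity, ?_⟩
  rintro δ ⟨hδ0, hδ1⟩ t
  have hδne : δ ≠ 0 := ne_of_gt hδ0
  set u := t / δ with hu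
  have hkey := euclidean_norm_le_abs_add_abs (δ • γ u - sharpFold t)
  have e0 : (δ • γ u - sharpFold t) 0 =
      δ * (∫ s in (0:ℝ)..u, Real.cos (θ s)) + |t| := by
    simp [hγ, hsharp, PiLp.sub_apply, PiLp.smul_apply, smul_eq_mul, sub_neg_eq_add]
  have e1 : (δ • γ u - sharpFold t) 1 =
      δ * (∫ s in (0:ℝ)..u, Real.sin (θ s)) := by
    simp [hγ, hsharp, PiLp.sub_apply, PiLp.smul_apply, smul_eq_mul]
  rcases le_or_gt t 0 with ht | ht
  · -- t ≤ 0
    have hu0 : u ≤ 0 := div_nonpos_of_nonpos_of_nonneg ht hδ0.le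
    obtain ⟨g0, g1⟩ := hγneg u hu0
    have habs : |t| = -t := abs_of_nonpos ht
    have hz0 : (δ • γ u - sharpFold t) 0 = 0 := by
      rw [e0, g0, hu, mul_div_cancel₀ _ hδne, habs]; ring
    have hz1 : (δ • γ u - sharpFold t) 1 = 0 := by
      rw [e1, g1, mul_zero]
    calc ‖δ • γ u - sharpFold t‖ ≤ |(δ • γ u - sharpFold t) 0| + |(δ • γ u - sharpFold t) 1| :=
          hkey
      _ = 0 := by rw [hz0, hz1]; simp
      _ ≤ (4 * c + 1) * δ := by positivity
  · rcases le_or_gt t (δ * c) with htc | htc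
    · -- 0 < t ≤ δ c
      have hu0 : 0 ≤ u := div_nonneg ht.le hδ0.le
      have huc : u ≤ c := (div_le_iff₀ hδ0).mpr (by linarith [htc])
      have hI0 : |∫ s in (0:ℝ)..u, Real.cos (θ s)| ≤ c := by
        have := habs1 (fun s => Real.cos (θ s)) (fun x => Real.abs_cos_le_one _) 0 u
        calc |∫ s in (0:ℝ)..u, Real.cos (θ s)| ≤ |u - 0| := this
          _ ≤ c := by rw [sub_zero, abs_of_nonneg hu0]; exact huc
      have hI1 : |∫ s in (0:ℝ)..u, Real.sin (θ s)| ≤ c := by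
        have := habs1 (fun s => Real.sin (θ s)) (fun x => Real.abs_sin_le_one _) 0 u
        calc |∫ s in (0:ℝ)..u, Real.sin (θ s)| ≤ |u - 0| := this
          _ ≤ c := by rw [sub_zero, abs_of_nonneg hu0]; exact huc
      have habs : |t| = t := abs_of_pos ht
      have hb0 : |(δ • γ u - sharpFold t) 0| ≤ 2 * c * δ := by
        rw [e0, habs]
        calc |δ * (∫ s in (0:ℝ)..u, Real.cos (θ s)) + t|
            ≤ |δ * (∫ s in (0:ℝ)..u, Real.cos (θ s))| + |t| := abs_add_le _ _
          _ = δ * |∫ s in (0:ℝ)..u, Real.cos (θ s)| + t := by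
              rw [abs_mul, abs_of_pos hδ0, abs_of_pos ht]
          _ ≤ δ * c + δ * c := by
              have := mul_le_mul_of_nonneg_left hI0 hδ0.le
              linarith [htc]
          _ = 2 * c * δ := by ring
      have hb1 : |(δ • γ u - sharpFold t) 1| ≤ c * δ := by
        rw [e1, abs_mul, abs_of_pos hδ0]
        calc δ * |∫ s in (0:ℝ)..u, Real.sin (θ s)| ≤ δ * c :=
              mul_le_mul_of_nonneg_left hI1 hδ0.le
          _ = c * δ := by ring
      calc ‖δ • γ u - sharpFold t‖ ≤ |(δ • γ u - sharpFold t) 0| + |(δ • γ u - sharpFold t) 1| :=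
            hkey
        _ ≤ 2 * c * δ + c * δ := add_le_add hb0 hb1
        _ ≤ (4 * c + 1) * δ := by nlinarith
    · -- δ c < t
      have huc : c ≤ u := (le_div_iff₀ hδ0).mpr (by linarith [htc])
      obtain ⟨g0, g1⟩ := hγpos u huc
      have htpos : 0 < t := ht
      have habs : |t| = t := abs_of_pos htpos
      have hz0 : (δ • γ u - sharpFold t) 0 = δ * (A + c) := by
        rw [e0, g0, habs, hu]
        field_simp
        ring
      have hb0 : |(δ • γ u - sharpFold t) 0| ≤ 2 * c * δ := by
        rw [hz0, abs_mul, abs_of_pos hδ0]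
        have : |A + c| ≤ 2 * c := by
          have := abs_add_le A c
          rw [abs_of_pos hc] at this
          linarith [hAbd]
        calc δ * |A + c| ≤ δ * (2 * c) := mul_le_mul_of_nonneg_left this hδ0.le
          _ = 2 * c * δ := by ring
      have hb1 : |(δ • γ u - sharpFold t) 1| ≤ c * δ := by
        rw [e1, g1, abs_mul, abs_of_pos hδ0]
        calc δ * |B| ≤ δ * c := mul_le_mul_of_nonneg_left hBbd hδ0.le
          _ = c * δ := by ring
      calc ‖δ • γ u - sharpFold t‖ ≤ |(δ • γ u - sharpFold t) 0| + |(δ • γ u - sharpFold t) 1| :=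
            hkey
        _ ≤ 2 * c * δ + c * δ := add_le_add hb0 hb1
        _ ≤ (4 * c + 1) * δ := by nlinarith
end
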